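/- The collision map of velocities v₁' = (φ⁻¹ ∘ u)(φ(v₁),φ(v₂)), v₂' = (φ⁻¹ ∘ v)(φ(v₁),φ(v₂)), with φ(v) = √((c+v)/(c−v)), u(x,y) = y(m₁x+m₂y)/(m₂x+m₁y), v(x,y) = x(m₁x+m₂y)/(m₂x+m₁y), conserves relativistic energy and momentum: m₁γ(v₁) + m₂γ(v₂) = m₁γ(v₁') + m₂γ(v₂') and m₁v₁γ(v₁) + m₂v₂γ(v₂) = m₁v₁'γ(v₁') + m₂v₂'γ(v₂'), where γ(v) = 1/√(1−v²/c²). -/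
import Mathlib


/-- `φ(v) = √((c+v)/(c−v))`. -/
noncomputable def phi (c v : ℝ) : ℝ := Real.sqrt ((c + v) / (c - v))

/-- The inverse of `φ`: `φ⁻¹(x) = c(x²−1)/(x²+1)`. -/
noncomputable def phiInv (c x : ℝ) : ℝ := c * (x ^ 2 - 1) / (x ^ 2 + 1)

/-- First component of the Yang–Baxter map. -/
noncomputable def ufun (m₁ m₂ x y : ℝ) : ℝ := y * (m₁ * x + m₂ * y) / (m₂ * x + m₁ * y)

/-- Second component of the Yang–Baxter map. -/
noncomputable def vfun (m₁ m₂ x y : ℝ) : ℝ := x * (m₁ * x + m₂ * y) / (m₂ * x + m₁ * y)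

/-- The Lorentz factor `γ(v) = 1/√(1 − v²/c²)`. -/
noncomputable def lorentz (c v : ℝ) : ℝ := 1 / Real.sqrt (1 - v ^ 2 / c ^ 2)

lemma lorentz_phiInv (c x : ℝ) (hc : 0 < c) (hx : 0 < x) :
    lorentz c (phiInv c x) = (x + x⁻¹) / 2 := by
  have hx2 : (0:ℝ) < x ^ 2 + 1 := by positivity
  have h1 : 1 - (phiInv c x) ^ 2 / c ^ 2 = (2 * x / (x ^ 2 + 1)) ^ 2 := by
    unfold phiInv
    field_simp
    ring
  rw [lorentz, h1, Real.sqrt_sq (by positivity)]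
  field_simp

lemma mul_lorentz_phiInv (c x : ℝ) (hc : 0 < c) (hx : 0 < x) :
    phiInv c x * lorentz c (phiInv c x) = c * (x - x⁻¹) / 2 := by
  rw [lorentz_phiInv c x hc hx, phiInv]
  have hx2 : (0:ℝ) < x ^ 2 + 1 := by positivity
  field_simp

lemma phi_pos (c v : ℝ) (hc : 0 < c) (hv : v ∈ Set.Ioo (-c) c) : 0 < phi c v := by
  obtain ⟨h1, h2⟩ := hv
  apply Real.sqrt_pos.mpr
  apply div_pos <;> linarith

lemma phiInv_phi (c v : ℝ) (hc : 0 < c) (hv : v ∈ Set.Ioo (-c) c) :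
    phiInv c (phi c v) = v := by
  obtain ⟨h1, h2⟩ := hv
  have hcv : (0:ℝ) < c - v := by linarith
  have hcv' : (0:ℝ) < c + v := by linarith
  have hsq : (phi c v) ^ 2 = (c + v) / (c - v) := by
    rw [phi, Real.sq_sqrt (by positivity)]
  rw [phiInv, hsq]
  field_simp
  ring

/-- The collision map of velocities conserves relativistic energy and momentum. -/
theorem collision_energy_momentum (c m₁ m₂ v₁ v₂ : ℝ)
    (hc : 0 < c) (hm₁ : 0 < m₁) (hm₂ : 0 < m₂)
    (hv₁ : v₁ ∈ Set.Ioo (-c) c) (hv₂ : v₂ ∈ Set.Ioo (-c) c) :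
    m₁ * lorentz c v₁ + m₂ * lorentz c v₂ =
      m₁ * lorentz c (phiInv c (ufun m₁ m₂ (phi c v₁) (phi c v₂))) +
      m₂ * lorentz c (phiInv c (vfun m₁ m₂ (phi c v₁) (phi c v₂))) ∧
    m₁ * v₁ * lorentz c v₁ + m₂ * v₂ * lorentz c v₂ =
      m₁ * phiInv c (ufun m₁ m₂ (phi c v₁) (phi c v₂)) *
          lorentz c (phiInv c (ufun m₁ m₂ (phi c v₁) (phi c v₂))) +
      m₂ * phiInv c (vfun m₁ m₂ (phi c v₁) (phi c v₂)) *
          lorentz c (phiInv c (vfun m₁ m₂ (phi c v₁) (phi c v₂))) := by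
  set x := phi c v₁ with hxdef
  set y := phi c v₂ with hydef
  have hx : 0 < x := phi_pos c v₁ hc hv₁
  have hy : 0 < y := phi_pos c v₂ hc hv₂
  have hden : 0 < m₂ * x + m₁ * y := by positivity
  have hnum : 0 < m₁ * x + m₂ * y := by positivity
  have hu : 0 < ufun m₁ m₂ x y := by unfold ufun; positivity
  have hv : 0 < vfun m₁ m₂ x y := by unfold vfun; positivity
  have e1 : v₁ = phiInv c x := (phiInv_phi c v₁ hc hv₁).symm
  have e2 : v₂ = phiInv c y := (phiInv_phi c v₂ hc hv₂).symm
  rw [show lorentz c v₁ = lorentz c (phiInv c x) from by rw [← e1],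
      show lorentz c v₂ = lorentz c (phiInv c y) from by rw [← e2]]
  rw [lorentz_phiInv c x hc hx, lorentz_phiInv c y hc hy,
      lorentz_phiInv c _ hc hu, lorentz_phiInv c _ hc hv]
  constructor
  · unfold ufun vfun
    field_simp
    ring
  · rw [show m₁ * v₁ * ((x + x⁻¹) / 2) = m₁ * (v₁ * ((x + x⁻¹) / 2)) by ring,
        show m₂ * v₂ * ((y + y⁻¹) / 2) = m₂ * (v₂ * ((y + y⁻¹) / 2)) by ring,
        e1, e2,
        show phiInv c x * ((x + x⁻¹) / 2) = phiInv c x * lorentz c (phiInv c x) from by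
          rw [lorentz_phiInv c x hc hx],
        show phiInv c y * ((y + y⁻¹) / 2) = phiInv c y * lorentz c (phiInv c y) from by
          rw [lorentz_phiInv c y hc hy],
        mul_lorentz_phiInv c x hc hx, mul_lorentz_phiInv c y hc hy]
    have hmu := mul_lorentz_phiInv c _ hc hu
    have hmv := mul_lorentz_phiInv c _ hc hv
    rw [show m₁ * phiInv c (ufun m₁ m₂ x y) * ((ufun m₁ m₂ x y + (ufun m₁ m₂ x y)⁻¹) / 2)
          = m₁ * (phiInv c (ufun m₁ m₂ x y) * lorentz c (phiInv c (ufun m₁ m₂ x y))) from by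
        rw [lorentz_phiInv c _ hc hu]; ring,
        show m₂ * phiInv c (vfun m₁ m₂ x y) * ((vfun m₁ m₂ x y + (vfun m₁ m₂ x y)⁻¹) / 2)
          = m₂ * (phiInv c (vfun m₁ m₂ x y) * lorentz c (phiInv c (vfun m₁ m₂ x y))) from by
        rw [lorentz_phiInv c _ hc hv]; ring,
        hmu, hmv]
    unfold ufun vfun
    field_simp
    ring
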